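/- In Case 0 or Case 1, let Q moreover satisfy Q({M : Mv = 0}) < 1 for every v ∈ ℝ^q \ {0} and ∫ ψ(tr(M)) Q(dM) < ∞. Then for every symmetric positive definite Σ ∈ ℝ^{q×q}, the matrix Ψ_ρ(Σ,Q) is symmetric positive definite and L_ρ(Ψ_ρ(Σ,Q), Q) < L_ρ(Σ, Q) unless Ψ_ρ(Σ,Q) = Σ. -/

import Mathlib

open MeasureTheory Matrix Filter
open scoped ENNReal

/-- Measurable-space structure on matrices (entrywise). -/
instance matMS {m n : Type*} : MeasurableSpace (Matrix m n ℝ) :=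
  inferInstanceAs (MeasurableSpace (m → n → ℝ))

/-- `𝕄(V)`: symmetric matrices whose column space is contained in `V`. -/
def MM (q : ℕ) (V : Submodule ℝ (Fin q → ℝ)) : Set (Matrix (Fin q) (Fin q) ℝ) :=
  {M | M.IsSymm ∧ ∀ x, M.mulVec x ∈ V}

/-- The criterion function `L_ρ(Σ, Q)`. -/
noncomputable def Lrho (q : ℕ) (ρ : ℝ → ℝ) (Q : Measure (Matrix (Fin q) (Fin q) ℝ))
    (S : Matrix (Fin q) (Fin q) ℝ) : ℝ :=
  (∫ M, (ρ (S⁻¹ * M).trace - ρ M.trace) ∂Q) + Real.log S.det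

/-- `Ψ_ρ(Σ, Q) = ∫ ρ'(tr(Σ⁻¹M)) M Q(dM)`, defined entrywise, with the integrand
interpreted as the zero matrix when `M = 0`. -/
noncomputable def Psi (q : ℕ) (ρ' : ℝ → ℝ) (Q : Measure (Matrix (Fin q) (Fin q) ℝ))
    (S : Matrix (Fin q) (Fin q) ℝ) : Matrix (Fin q) (Fin q) ℝ :=
  Matrix.of fun i j => ∫ M, (if M = 0 then 0 else ρ' (S⁻¹ * M).trace * M i j) ∂Q

/-- Standing assumptions on `ρ`: differentiable on `(0,∞)` with continuous, strictly
positive, non-increasing derivative `ρ'`, and `ψ(s) = s·ρ'(s)` non-decreasing. -/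
def RhoAss (ρ ρ' : ℝ → ℝ) : Prop :=
  (∀ s : ℝ, 0 < s → HasDerivAt ρ (ρ' s) s) ∧
  ContinuousOn ρ' (Set.Ioi 0) ∧
  (∀ s : ℝ, 0 < s → 0 < ρ' s) ∧
  (∀ s t : ℝ, 0 < s → s ≤ t → ρ' t ≤ ρ' s) ∧
  (∀ s t : ℝ, 0 < s → s ≤ t → s * ρ' s ≤ t * ρ' t)

/-- Case 0: `Q({0}) = 0` and `ρ(s) = q·log s` for `s > 0`. -/
def Case0 (q : ℕ) (ρ : ℝ → ℝ) (Q : Measure (Matrix (Fin q) (Fin q) ℝ)) : Prop :=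
  Q {0} = 0 ∧ ∀ s : ℝ, 0 < s → ρ s = q * Real.log s

/-- Case 1, with `ψb ∈ (q, ∞]` the limit of `ψ(s) = s·ρ'(s)` as `s → ∞`:
`ρ` is continuous at `0`, `ψ` is strictly increasing on `(0,∞)` with limit `0` at `0+`,
and if `ψb = ∞` then moreover `∫ ψ(tr M) Q(dM) < ∞`. -/
def Case1 (q : ℕ) (ρ ρ' : ℝ → ℝ) (Q : Measure (Matrix (Fin q) (Fin q) ℝ)) (ψb : ℝ≥0∞) :
    Prop :=
  ContinuousWithinAt ρ (Set.Ici 0) 0 ∧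
  StrictMonoOn (fun s => s * ρ' s) (Set.Ioi 0) ∧
  Tendsto (fun s => s * ρ' s) (nhdsWithin 0 (Set.Ioi 0)) (nhds 0) ∧
  (q : ℝ≥0∞) < ψb ∧
  (ψb ≠ ⊤ → Tendsto (fun s => s * ρ' s) atTop (nhds ψb.toReal)) ∧
  (ψb = ⊤ → Tendsto (fun s => s * ρ' s) atTop atTop ∧
      Integrable (fun M : Matrix (Fin q) (Fin q) ℝ => M.trace * ρ' M.trace) Q)

section MatrixHelpers
variable {q : ℕ}

lemma psd_entry_symm {M : Matrix (Fin q) (Fin q) ℝ} (hM : M.IsHermitian) (i j : Fin q) :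
    M j i = M i j := by
  have := congrFun (congrFun hM i) j
  simpa [Matrix.conjTranspose_apply] using this

lemma psd_diag_nonneg {M : Matrix (Fin q) (Fin q) ℝ} (hM : M.PosSemidef) (i : Fin q) :
    0 ≤ M i i := by
  have := hM.dotProduct_mulVec_nonneg (Pi.single i 1)
  simpa [Matrix.mulVec_single, dotProduct, Pi.single_apply] using this

lemma psd_trace_nonneg {M : Matrix (Fin q) (Fin q) ℝ} (hM : M.PosSemidef) :
    0 ≤ M.trace := by
  have : M.trace = ∑ i, M i i := rfl
  rw [this]
  exact Finset.sum_nonneg fun i _ => psd_diag_nonneg hM i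

lemma psd_trace_mul_nonneg {P M : Matrix (Fin q) (Fin q) ℝ} (hP : P.PosSemidef)
    (hM : M.PosSemidef) : 0 ≤ (P * M).trace := by
  obtain ⟨B, rfl⟩ : ∃ B : Matrix (Fin q) (Fin q) ℝ, P = Bᴴ * B := by
    open scoped MatrixOrder in exact CStarAlgebra.nonneg_iff_eq_star_mul_self.mp hP.nonneg
  rw [Matrix.trace_mul_cycle, Matrix.trace_mul_cycle]
  exact psd_trace_nonneg (hM.mul_mul_conjTranspose_same B)

lemma psd_entry_abs_le_trace {M : Matrix (Fin q) (Fin q) ℝ} (hM : M.PosSemidef) (i j : Fin q) :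
    |M i j| ≤ M.trace := by
  have hsymm := psd_entry_symm hM.1 i j
  have h1 := hM.dotProduct_mulVec_nonneg (Pi.single i 1 + Pi.single j 1)
  have h2 := hM.dotProduct_mulVec_nonneg (Pi.single i 1 - Pi.single j 1)
  simp only [star_trivial, Matrix.mulVec_add, Matrix.mulVec_sub, dotProduct_add,
    dotProduct_sub, add_dotProduct, sub_dotProduct,
    Matrix.mulVec_single, mul_one] at h1 h2
  have hii : 0 ≤ M i i := psd_diag_nonneg hM i
  have hjj : 0 ≤ M j j := psd_diag_nonneg hM j
  have hsingle : ∀ (k l : Fin q), (Pi.single k 1 : Fin q → ℝ) ⬝ᵥ (fun m => M m l) = M k l := by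
    intro k l
    simp [dotProduct, Pi.single_apply]
  simp only [MulOpposite.op_one, one_smul, single_dotProduct, one_mul, Matrix.col_apply, hsingle] at h1 h2
  rcases eq_or_ne i j with rfl | hij
  · rw [abs_of_nonneg hii]
    have : M.trace = ∑ k, M k k := rfl
    rw [this]
    exact Finset.single_le_sum (fun k _ => psd_diag_nonneg hM k) (Finset.mem_univ i)
  · have htr : M i i + M j j ≤ M.trace := by
      have : M.trace = ∑ k, M k k := rfl
      rw [this]
      have := Finset.sum_le_sum_of_subset_of_nonneg
        (s := ({i, j} : Finset (Fin q))) (t := Finset.univ)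
        (by intro x _; exact Finset.mem_univ x)
        (fun k _ _ => psd_diag_nonneg hM k)
      simpa [Finset.sum_pair hij] using this
    rw [abs_le]
    constructor <;> nlinarith [htr]

end MatrixHelpers
section B
variable {q : ℕ}


lemma psd_trace_eq_zero_iff {M : Matrix (Fin q) (Fin q) ℝ} (hM : M.PosSemidef) :
    M.trace = 0 ↔ M = 0 := by
  constructor
  · intro htr
    have hdiag : ∀ i, M i i = 0 := by
      have hsum : ∑ i, M i i = 0 := htr
      intro i
      exact (Finset.sum_eq_zero_iff_of_nonneg
        (fun k _ => psd_diag_nonneg hM k)).mp hsum i (Finset.mem_univ i)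
    ext i j
    have hsymm : M j i = M i j := by
      have := congrFun (congrFun hM.1 i) j
      simpa [Matrix.conjTranspose_apply] using this
    have h1 := hM.dotProduct_mulVec_nonneg (Pi.single i 1 + Pi.single j 1)
    have h2 := hM.dotProduct_mulVec_nonneg (Pi.single i 1 - Pi.single j 1)
    simp only [star_trivial, Matrix.mulVec_add, Matrix.mulVec_sub, dotProduct_add,
      dotProduct_sub, add_dotProduct, sub_dotProduct,
      Matrix.mulVec_single, mul_one] at h1 h2
    have hsingle : ∀ (k l : Fin q), (Pi.single k 1 : Fin q → ℝ) ⬝ᵥ (fun m => M m l) = M k l := by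
      intro k l; simp [dotProduct, Pi.single_apply]
    simp only [MulOpposite.op_one, one_smul, single_dotProduct, one_mul, Matrix.col_apply, hsingle, hdiag] at h1 h2
    simp only [Matrix.zero_apply]
    nlinarith [h1, h2, hsymm]
  · rintro rfl; simp

lemma psd_trace_pos {M : Matrix (Fin q) (Fin q) ℝ} (hM : M.PosSemidef) (hM0 : M ≠ 0) :
    0 < M.trace := by
  have hnn : (0:ℝ) ≤ M.trace := by
    have h : M.trace = ∑ i, M i i := rfl
    rw [h]; exact Finset.sum_nonneg fun i _ => psd_diag_nonneg hM i
  rcases lt_or_eq_of_le hnn with h | h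
  · exact h
  · exact absurd ((psd_trace_eq_zero_iff hM).mp h.symm) hM0

/-- Sandwich of a positive definite matrix between multiples of the identity. -/
lemma posdef_sandwich (hq : 1 ≤ q) {A : Matrix (Fin q) (Fin q) ℝ} (hA : A.PosDef) :
    ∃ c C : ℝ, 0 < c ∧ c ≤ 1 ∧ 1 ≤ C ∧ (A - c • 1).PosSemidef ∧ (C • 1 - A).PosSemidef := by
  haveI : NeZero q := ⟨by omega⟩
  have hH := hA.isHermitian
  set μ := hH.eigenvalues with hμ
  set U : Matrix (Fin q) (Fin q) ℝ := (hH.eigenvectorUnitary : Matrix (Fin q) (Fin q) ℝ) with hU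
  have hUU : U * star U = 1 := (Matrix.mem_unitaryGroup_iff).mp hH.eigenvectorUnitary.2
  have hspec : A = U * Matrix.diagonal (RCLike.ofReal ∘ μ) * star U := hH.spectral_theorem
  have hofReal : (RCLike.ofReal ∘ μ : Fin q → ℝ) = μ := by
    funext i; simp [RCLike.ofReal]
  rw [hofReal] at hspec
  have hμpos : ∀ i, 0 < μ i := hA.eigenvalues_pos
  haveI : Nonempty (Fin q) := ⟨⟨0, by omega⟩⟩
  set c : ℝ := min (Finset.univ.inf' Finset.univ_nonempty μ) 1 with hc
  set C : ℝ := max (Finset.univ.sup' Finset.univ_nonempty μ) 1 with hC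
  have hcpos : 0 < c := by
    apply lt_min _ one_pos
    rw [Finset.lt_inf'_iff]
    exact fun i _ => hμpos i
  have hcle : ∀ i, c ≤ μ i := fun i =>
    le_trans (min_le_left _ _) (Finset.inf'_le μ (Finset.mem_univ i))
  have hCle : ∀ i, μ i ≤ C := fun i =>
    le_trans (Finset.le_sup' μ (Finset.mem_univ i)) (le_max_left _ _)
  refine ⟨c, C, hcpos, min_le_right _ _, le_max_right _ _, ?_, ?_⟩
  · have key : A - c • 1 = U * Matrix.diagonal (fun i => μ i - c) * star U := by
      have h1 : Matrix.diagonal (fun i => μ i - c)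
          = Matrix.diagonal μ - c • (1 : Matrix (Fin q) (Fin q) ℝ) := by
        rw [Matrix.smul_one_eq_diagonal, ← Matrix.diagonal_sub]
      rw [h1, Matrix.mul_sub, Matrix.sub_mul, ← hspec]
      congr 1
      rw [Matrix.mul_smul, Matrix.mul_one, Matrix.smul_mul, hUU]
    rw [key, Matrix.star_eq_conjTranspose]
    exact (Matrix.PosSemidef.diagonal
      (fun i => by simpa using sub_nonneg.mpr (hcle i))).mul_mul_conjTranspose_same U
  · have key : C • 1 - A = U * Matrix.diagonal (fun i => C - μ i) * star U := by
      have h1 : Matrix.diagonal (fun i => C - μ i)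
          = C • (1 : Matrix (Fin q) (Fin q) ℝ) - Matrix.diagonal μ := by
        rw [Matrix.smul_one_eq_diagonal, ← Matrix.diagonal_sub]
      rw [h1, Matrix.mul_sub, Matrix.sub_mul, ← hspec]
      congr 1
      rw [Matrix.mul_smul, Matrix.mul_one, Matrix.smul_mul, hUU]
    rw [key, Matrix.star_eq_conjTranspose]
    exact (Matrix.PosSemidef.diagonal
      (fun i => by simpa using sub_nonneg.mpr (hCle i))).mul_mul_conjTranspose_same U

end B
section C
variable {q : ℕ}

lemma trace_smul_one_mul (c : ℝ) (M : Matrix (Fin q) (Fin q) ℝ) :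
    ((c • (1 : Matrix (Fin q) (Fin q) ℝ)) * M).trace = c * M.trace := by
  rw [Matrix.smul_mul, Matrix.one_mul, Matrix.trace_smul, smul_eq_mul]

/-- Positive definite matrices have trace equal to sum of eigenvalues, etc.:
the fundamental inequality `log det G ≤ tr G - q`, strict unless `G = 1`. -/
lemma logdet_le_trace_sub (hq : 1 ≤ q) {G : Matrix (Fin q) (Fin q) ℝ} (hG : G.PosDef) :
    Real.log G.det ≤ G.trace - q ∧ (G ≠ 1 → Real.log G.det < G.trace - q) := by
  haveI : Nonempty (Fin q) := ⟨⟨0, by omega⟩⟩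
  have hH := hG.isHermitian
  set μ := hH.eigenvalues with hμ
  set U : Matrix (Fin q) (Fin q) ℝ := (hH.eigenvectorUnitary : Matrix (Fin q) (Fin q) ℝ) with hU
  have hU'U : star U * U = 1 := (Matrix.mem_unitaryGroup_iff').mp hH.eigenvectorUnitary.2
  have hofReal : (RCLike.ofReal ∘ μ : Fin q → ℝ) = μ := by funext i; simp [RCLike.ofReal]
  have hspec : G = U * Matrix.diagonal μ * star U := by
    have := hH.spectral_theorem; rwa [hofReal] at this
  have hμpos : ∀ i, 0 < μ i := hG.eigenvalues_pos
  have hdet : G.det = ∏ i, μ i := by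
    have := hH.det_eq_prod_eigenvalues
    simpa using this
  have htr : G.trace = ∑ i, μ i := by
    conv_lhs => rw [hspec]
    rw [Matrix.trace_mul_cycle, hU'U, Matrix.one_mul, Matrix.trace_diagonal]
  have hlog : Real.log G.det = ∑ i, Real.log (μ i) := by
    rw [hdet, Real.log_prod (fun i _ => (hμpos i).ne')]
  have hcard : (Finset.univ : Finset (Fin q)).card = q := by simp
  have hle : ∀ i, Real.log (μ i) ≤ μ i - 1 :=
    fun i => Real.log_le_sub_one_of_pos (hμpos i)
  constructor
  · rw [hlog, htr]
    calc ∑ i, Real.log (μ i) ≤ ∑ i, (μ i - 1) := Finset.sum_le_sum fun i _ => hle i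
    _ = (∑ i, μ i) - q := by rw [Finset.sum_sub_distrib]; simp
  · intro hG1
    have hex : ∃ i, μ i ≠ 1 := by
      by_contra h
      push_neg at h
      apply hG1
      have hd1 : Matrix.diagonal μ = 1 := by
        rw [show μ = fun _ => (1:ℝ) from funext h]
        exact Matrix.diagonal_one
      have hUU : U * star U = 1 := (Matrix.mem_unitaryGroup_iff).mp hH.eigenvectorUnitary.2
      rw [hspec, hd1, Matrix.mul_one, hUU]
    obtain ⟨i0, hi0⟩ := hex
    rw [hlog, htr]
    have hstrict : ∑ i, Real.log (μ i) < ∑ i, (μ i - 1) := by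
      apply Finset.sum_lt_sum (fun i _ => hle i)
      exact ⟨i0, Finset.mem_univ i0, Real.log_lt_sub_one_of_pos (hμpos i0) hi0⟩
    calc ∑ i, Real.log (μ i) < ∑ i, (μ i - 1) := hstrict
    _ = (∑ i, μ i) - q := by rw [Finset.sum_sub_distrib]; simp

end C


lemma rho_slope {ρ ρ' : ℝ → ℝ} (hρ : RhoAss ρ ρ') :
    ∀ x y : ℝ, 0 < x → 0 < y → ρ y - ρ x ≤ ρ' x * (y - x) := by
  obtain ⟨hderiv, _, hpos, hanti, _⟩ := hρ
  have key : ∀ a b : ℝ, 0 < a → a < b → ∃ ξ, a < ξ ∧ ξ < b ∧ ρ b - ρ a = ρ' ξ * (b - a) := by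
    intro a b ha hab
    have hcont : ContinuousOn ρ (Set.Icc a b) := by
      intro x hx
      exact ((hderiv x (lt_of_lt_of_le ha hx.1)).continuousAt).continuousWithinAt
    obtain ⟨ξ, hξ, hslope⟩ := exists_hasDerivAt_eq_slope ρ ρ' hab hcont
      (fun x hx => hderiv x (lt_of_lt_of_le ha hx.1.le))
    refine ⟨ξ, hξ.1, hξ.2, ?_⟩
    have hba : b - a ≠ 0 := sub_ne_zero.mpr hab.ne'
    rw [hslope]
    field_simp
  intro x y hx hy
  rcases lt_trichotomy x y with h | h | h
  · obtain ⟨ξ, h1, h2, heq⟩ := key x y hx h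
    rw [heq]
    have := hanti x ξ hx h1.le
    nlinarith
  · simp [h]
  · obtain ⟨ξ, h1, h2, heq⟩ := key y x hy h
    have : ρ x - ρ y = ρ' ξ * (x - y) := heq
    have hx' := hanti ξ x (lt_trans hy h1) h2.le
    nlinarith [hpos ξ (lt_trans hy h1)]

lemma rho_mono {ρ ρ' : ℝ → ℝ} (hρ : RhoAss ρ ρ') :
    ∀ x y : ℝ, 0 < x → x ≤ y → ρ x ≤ ρ y := by
  intro x y hx hxy
  have hy : 0 < y := lt_of_lt_of_le hx hxy
  have := rho_slope hρ y x hy hx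
  nlinarith [hρ.2.2.1 y hy]


section E
variable {q : ℕ}

lemma measurable_entry (i j : Fin q) :
    Measurable fun M : Matrix (Fin q) (Fin q) ℝ => M i j :=
  ((measurable_pi_apply j).comp (measurable_pi_apply i) : _)

lemma measurable_trace' :
    Measurable fun M : Matrix (Fin q) (Fin q) ℝ => M.trace := by
  have h : (fun M : Matrix (Fin q) (Fin q) ℝ => M.trace) = fun M => ∑ i, M i i := rfl
  rw [h]
  exact Finset.measurable_sum _ fun i _ => measurable_entry i i

lemma trace_mul_entries (W M : Matrix (Fin q) (Fin q) ℝ) :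
    (W * M).trace = ∑ i, ∑ j, W i j * M j i := by
  simp [Matrix.trace, Matrix.diag, Matrix.mul_apply]

lemma measurable_trace_mul (W : Matrix (Fin q) (Fin q) ℝ) :
    Measurable fun M : Matrix (Fin q) (Fin q) ℝ => (W * M).trace := by
  simp only [trace_mul_entries]
  exact Finset.measurable_sum _ fun i _ =>
    Finset.measurable_sum _ fun j _ => (measurable_entry j i).const_mul _

lemma measurableSet_zero_matrix :
    MeasurableSet ({0} : Set (Matrix (Fin q) (Fin q) ℝ)) := by
  have h : ({0} : Set (Matrix (Fin q) (Fin q) ℝ))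
      = ⋂ i, ⋂ j, {M : Matrix (Fin q) (Fin q) ℝ | M i j = 0} := by
    ext M
    simp only [Set.mem_singleton_iff, Set.mem_iInter, Set.mem_setOf_eq]
    constructor
    · rintro rfl i j; rfl
    · intro h; ext i j; exact h i j
  rw [h]
  exact MeasurableSet.iInter fun i => MeasurableSet.iInter fun j =>
    (measurable_entry i j) (measurableSet_singleton 0)

lemma measurableSet_mulVec_zero (v : Fin q → ℝ) :
    MeasurableSet {M : Matrix (Fin q) (Fin q) ℝ | M.mulVec v = 0} := by
  have h : {M : Matrix (Fin q) (Fin q) ℝ | M.mulVec v = 0}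
      = ⋂ i, {M : Matrix (Fin q) (Fin q) ℝ | (∑ j, M i j * v j) = 0} := by
    ext M
    simp only [Set.mem_setOf_eq, Set.mem_iInter]
    constructor
    · intro h i; have := congrFun h i; simpa [Matrix.mulVec, dotProduct] using this
    · intro h; funext i; simpa [Matrix.mulVec, dotProduct] using h i
  rw [h]
  exact MeasurableSet.iInter fun i =>
    (Finset.measurable_sum _ fun j _ => (measurable_entry i j).mul_const _)
      (measurableSet_singleton 0)

lemma measurable_ite_pos {f : ℝ → ℝ} (hf : ContinuousOn f (Set.Ioi 0)) (c : ℝ) :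
    Measurable fun s : ℝ => if 0 < s then f s else c := by
  have hres : Measurable ((Set.Ioi (0:ℝ)).restrict f) :=
    (continuousOn_iff_continuous_restrict.mp hf).measurable
  have hg : Measurable fun x : ((Set.Ioi (0:ℝ))ᶜ : Set ℝ) => c := measurable_const
  have hd := Measurable.dite (s := Set.Ioi (0:ℝ)) hres hg measurableSet_Ioi
  have heq : (fun s : ℝ => if 0 < s then f s else c)
      = fun x : ℝ => if hx : x ∈ Set.Ioi (0:ℝ) then (Set.Ioi (0:ℝ)).restrict f ⟨x, hx⟩ else
          (fun _ : ((Set.Ioi (0:ℝ))ᶜ : Set ℝ) => c) ⟨x, hx⟩ := by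
    funext s
    by_cases h : (0:ℝ) < s <;> simp [Set.restrict, h, Set.mem_Ioi]
  rw [heq]
  exact hd
end E
section F
variable {q : ℕ} {ρ ρ' : ℝ → ℝ}
  {Q : Measure (Matrix (Fin q) (Fin q) ℝ)} [IsProbabilityMeasure Q]

lemma trace_posdef_mul_pos (hq : 1 ≤ q) {W M : Matrix (Fin q) (Fin q) ℝ}
    (hW : W.PosDef) (hM : M.PosSemidef) (hM0 : M ≠ 0) : 0 < (W * M).trace := by
  obtain ⟨c, C, hc, hc1, hC1, hlow, hup⟩ := posdef_sandwich hq hW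
  have h1 : 0 ≤ ((W - c • 1) * M).trace := psd_trace_mul_nonneg hlow hM
  have h2 : ((W - c • 1) * M).trace = (W * M).trace - c * M.trace := by
    rw [Matrix.sub_mul, Matrix.trace_sub, trace_smul_one_mul]
  have h3 : 0 < M.trace := psd_trace_pos hM hM0
  nlinarith

lemma trace_posdef_mul_bounds {W M : Matrix (Fin q) (Fin q) ℝ} {c C : ℝ}
    (hlow : (W - c • 1).PosSemidef) (hup : (C • 1 - W).PosSemidef) (hM : M.PosSemidef) :
    c * M.trace ≤ (W * M).trace ∧ (W * M).trace ≤ C * M.trace := by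
  have h1 : 0 ≤ ((W - c • 1) * M).trace := psd_trace_mul_nonneg hlow hM
  have h2 : 0 ≤ ((C • 1 - W) * M).trace := psd_trace_mul_nonneg hup hM
  rw [Matrix.sub_mul, Matrix.trace_sub, trace_smul_one_mul] at h1 h2
  constructor <;> linarith

/-- Integrability of the entries of the `Psi` integrand. -/
lemma integrable_psi_entry (hρ : RhoAss ρ ρ') (hQpsd : ∀ᵐ M ∂Q, M.PosSemidef)
    (hint : Integrable (fun M : Matrix (Fin q) (Fin q) ℝ => M.trace * ρ' M.trace) Q)
    (hq : 1 ≤ q) {W : Matrix (Fin q) (Fin q) ℝ} (hW : W.PosDef) (i j : Fin q) :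
    Integrable (fun M : Matrix (Fin q) (Fin q) ℝ =>
      if M = 0 then 0 else ρ' (W * M).trace * M i j) Q := by
  obtain ⟨c, C, hc, hc1, hC1, hlow, hup⟩ := posdef_sandwich hq hW
  set F : Matrix (Fin q) (Fin q) ℝ → ℝ :=
    fun M => (if 0 < (W * M).trace then ρ' (W * M).trace else 0) * M i j with hF
  have hFmeas : Measurable F :=
    ((measurable_ite_pos hρ.2.1 0).comp (measurable_trace_mul W)).mul (measurable_entry i j)
  have hae : ∀ᵐ M ∂Q, F M = (if M = 0 then 0 else ρ' (W * M).trace * M i j) := by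
    filter_upwards [hQpsd] with M hM
    by_cases h0 : M = 0
    · subst h0; simp [hF]
    · have htr : 0 < (W * M).trace := trace_posdef_mul_pos hq hW hM h0
      simp [hF, htr, h0]
  have haesm : AEStronglyMeasurable
      (fun M : Matrix (Fin q) (Fin q) ℝ => if M = 0 then 0 else ρ' (W * M).trace * M i j) Q :=
    hFmeas.aestronglyMeasurable.congr hae
  refine Integrable.mono' ((hint.abs).const_mul (1/c)) haesm ?_
  filter_upwards [hQpsd] with M hM
  by_cases h0 : M = 0
  · subst h0
    simp [Real.norm_eq_abs]
  · have ha : 0 < M.trace := psd_trace_pos hM h0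
    have hb := trace_posdef_mul_bounds hlow hup hM
    have hbpos : 0 < (W * M).trace := lt_of_lt_of_le (by positivity) hb.1
    have hρb : 0 < ρ' (W * M).trace := hρ.2.2.1 _ hbpos
    have h1 : ρ' (W * M).trace ≤ ρ' (c * M.trace) :=
      hρ.2.2.2.1 _ _ (by positivity) hb.1
    have h2 : |M i j| ≤ M.trace := psd_entry_abs_le_trace hM i j
    have h3 : (c * M.trace) * ρ' (c * M.trace) ≤ M.trace * ρ' M.trace :=
      hρ.2.2.2.2 _ _ (by positivity) (by nlinarith)
    have hρca : 0 < ρ' (c * M.trace) := hρ.2.2.1 _ (by positivity)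
    have hρa : 0 < ρ' M.trace := hρ.2.2.1 _ ha
    rw [if_neg h0, Real.norm_eq_abs, abs_mul, abs_of_pos hρb,
      abs_of_pos (show (0:ℝ) < M.trace * ρ' M.trace by positivity)]
    have hkey : ρ' (W * M).trace * |M i j| ≤ ρ' (c * M.trace) * M.trace := by
      apply mul_le_mul h1 h2 (abs_nonneg _) hρca.le
    have : ρ' (c * M.trace) * M.trace ≤ (1/c) * (M.trace * ρ' M.trace) := by
      rw [div_mul_eq_mul_div, le_div_iff₀ hc]
      nlinarith
    linarith

end F
section G
variable {q : ℕ} {ρ ρ' : ℝ → ℝ}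
  {Q : Measure (Matrix (Fin q) (Fin q) ℝ)} [IsProbabilityMeasure Q]

/-- The measurable modification of `ρ`. -/
noncomputable def rho0 (ρ : ℝ → ℝ) : ℝ → ℝ := fun s => if 0 < s then ρ s else ρ 0

lemma rho0_measurable (hρ : RhoAss ρ ρ') : Measurable (rho0 ρ) := by
  apply measurable_ite_pos
  intro x hx
  exact ((hρ.1 x hx).continuousAt).continuousWithinAt

lemma rho0_congr_ae (hρ : RhoAss ρ ρ') (hQpsd : ∀ᵐ M ∂Q, M.PosSemidef)
    (hq : 1 ≤ q) {W : Matrix (Fin q) (Fin q) ℝ} (hW : W.PosDef) :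
    (fun M : Matrix (Fin q) (Fin q) ℝ => ρ (W * M).trace - ρ M.trace)
      =ᵐ[Q] fun M => rho0 ρ (W * M).trace - rho0 ρ M.trace := by
  filter_upwards [hQpsd] with M hM
  by_cases h0 : M = 0
  · subst h0
    simp [rho0]
  · have ha : 0 < M.trace := psd_trace_pos hM h0
    have hb : 0 < (W * M).trace := trace_posdef_mul_pos hq hW hM h0
    simp [rho0, ha, hb]

lemma integrable_rho_diff (hρ : RhoAss ρ ρ') (hQpsd : ∀ᵐ M ∂Q, M.PosSemidef)
    (hint : Integrable (fun M : Matrix (Fin q) (Fin q) ℝ => M.trace * ρ' M.trace) Q)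
    (hq : 1 ≤ q) {W : Matrix (Fin q) (Fin q) ℝ} (hW : W.PosDef) :
    Integrable (fun M : Matrix (Fin q) (Fin q) ℝ =>
      rho0 ρ (W * M).trace - rho0 ρ M.trace) Q := by
  obtain ⟨c, C, hc, hc1, hC1, hlow, hup⟩ := posdef_sandwich hq hW
  set K : ℝ := max (C - 1) (1/c) with hK
  have hKpos : 0 < K := lt_of_lt_of_le (by positivity) (le_max_right _ _)
  have hmeas : Measurable (fun M : Matrix (Fin q) (Fin q) ℝ =>
      rho0 ρ (W * M).trace - rho0 ρ M.trace) :=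
    ((rho0_measurable hρ).comp (measurable_trace_mul W)).sub
      ((rho0_measurable hρ).comp measurable_trace')
  refine Integrable.mono' ((hint.abs).const_mul K) hmeas.aestronglyMeasurable ?_
  filter_upwards [hQpsd] with M hM
  by_cases h0 : M = 0
  · subst h0
    simp [Real.norm_eq_abs, rho0]
  · set a := M.trace with haeq
    have ha : 0 < a := psd_trace_pos hM h0
    set b := (W * M).trace with hbeq
    have hbnd := trace_posdef_mul_bounds hlow hup hM
    have hb : 0 < b := lt_of_lt_of_le (by positivity) hbnd.1
    have hρa : 0 < ρ' a := hρ.2.2.1 _ ha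
    have hρca : 0 < ρ' (c * a) := hρ.2.2.1 _ (by positivity)
    have hr0 : rho0 ρ b - rho0 ρ a = ρ b - ρ a := by simp [rho0, ha, hb]
    rw [Real.norm_eq_abs, hr0, abs_of_pos (show (0:ℝ) < a * ρ' a by positivity)]
    rw [abs_le]
    have hψmono : (c * a) * ρ' (c * a) ≤ a * ρ' a := hρ.2.2.2.2 _ _ (by positivity) (by nlinarith)
    constructor
    · -- lower bound : -(K ψ a) ≤ ρ b - ρ a
      rcases le_or_gt a b with hab | hba
      · have := rho_mono hρ a b ha hab
        nlinarith [mul_pos hKpos (mul_pos ha hρa)]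
      · have hslope := rho_slope hρ b a hb ha
        have h1 : ρ' b ≤ ρ' (c * a) := hρ.2.2.2.1 _ _ (by positivity) hbnd.1
        have h2 : ρ a - ρ b ≤ ρ' (c * a) * a := by nlinarith
        have h3 : ρ' (c * a) * a ≤ (1/c) * (a * ρ' a) := by
          rw [div_mul_eq_mul_div, le_div_iff₀ hc]; nlinarith
        have h4 : (1/c) * (a * ρ' a) ≤ K * (a * ρ' a) := by
          apply mul_le_mul_of_nonneg_right (le_max_right _ _) (by positivity)
        linarith
    · -- upper bound : ρ b - ρ a ≤ K ψ a
      rcases le_or_gt b a with hba | hab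
      · have := rho_mono hρ b a hb hba
        nlinarith [mul_pos hKpos (mul_pos ha hρa)]
      · have hslope := rho_slope hρ a b ha hb
        have h2 : ρ b - ρ a ≤ ρ' a * (C * a - a) := by nlinarith
        have h3 : ρ' a * (C * a - a) = (C - 1) * (a * ρ' a) := by ring
        have h4 : (C - 1) * (a * ρ' a) ≤ K * (a * ρ' a) := by
          apply mul_le_mul_of_nonneg_right (le_max_left _ _) (by positivity)
        linarith

/-- Weighted contraction of the `Psi` integrand against a coefficient array. -/
lemma psi_weighted (hρ : RhoAss ρ ρ') (hQpsd : ∀ᵐ M ∂Q, M.PosSemidef)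
    (hint : Integrable (fun M : Matrix (Fin q) (Fin q) ℝ => M.trace * ρ' M.trace) Q)
    (hq : 1 ≤ q) {W : Matrix (Fin q) (Fin q) ℝ} (hW : W.PosDef) (α : Fin q → Fin q → ℝ) :
    Integrable (fun M : Matrix (Fin q) (Fin q) ℝ =>
      if M = 0 then 0 else ρ' (W * M).trace * (∑ i, ∑ j, α i j * M i j)) Q ∧
    ∫ M, (if M = 0 then 0 else ρ' (W * M).trace * (∑ i, ∑ j, α i j * M i j)) ∂Q
      = ∑ i, ∑ j, α i j * ∫ M, (if M = 0 then 0 else ρ' (W * M).trace * M i j) ∂Q := by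
  have hfun : (fun M : Matrix (Fin q) (Fin q) ℝ =>
      if M = 0 then 0 else ρ' (W * M).trace * (∑ i, ∑ j, α i j * M i j))
      = fun M => ∑ i, ∑ j, α i j * (if M = 0 then 0 else ρ' (W * M).trace * M i j) := by
    funext M
    by_cases h0 : M = 0
    · simp [h0]
    · rw [if_neg h0, Finset.mul_sum]
      congr 1; funext i
      rw [Finset.mul_sum]
      congr 1; funext j
      rw [if_neg h0]; ring
  have hint' : ∀ i j : Fin q, Integrable (fun M : Matrix (Fin q) (Fin q) ℝ =>
      α i j * (if M = 0 then 0 else ρ' (W * M).trace * M i j)) Q :=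
    fun i j => (integrable_psi_entry hρ hQpsd hint hq hW i j).const_mul _
  constructor
  · rw [hfun]
    apply integrable_finset_sum
    intro i _
    exact integrable_finset_sum _ fun j _ => hint' i j
  · rw [hfun, integral_finset_sum _ (fun i _ => integrable_finset_sum _ fun j _ => hint' i j)]
    congr 1; funext i
    rw [integral_finset_sum _ (fun j _ => hint' i j)]
    congr 1; funext j
    exact integral_const_mul _ _

end G

section H
variable {q : ℕ} {ρ ρ' : ℝ → ℝ}
  {Q : Measure (Matrix (Fin q) (Fin q) ℝ)} [IsProbabilityMeasure Q]

lemma psi_apply (S : Matrix (Fin q) (Fin q) ℝ) (i j : Fin q) :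
    Psi q ρ' Q S i j = ∫ M, (if M = 0 then 0 else ρ' (S⁻¹ * M).trace * M i j) ∂Q := rfl

lemma dotProduct_mulVec_expand (x : Fin q → ℝ) (A : Matrix (Fin q) (Fin q) ℝ) :
    x ⬝ᵥ A.mulVec x = ∑ i, ∑ j, (x i * x j) * A i j := by
  simp only [dotProduct, Matrix.mulVec, Finset.mul_sum]
  congr 1; funext i; congr 1; funext j; ring

lemma psi_posdef (hρ : RhoAss ρ ρ') (hQpsd : ∀ᵐ M ∂Q, M.PosSemidef)
    (hint : Integrable (fun M : Matrix (Fin q) (Fin q) ℝ => M.trace * ρ' M.trace) Q)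
    (hker : ∀ v : Fin q → ℝ, v ≠ 0 → Q {M | M.mulVec v = 0} < 1)
    (hq : 1 ≤ q) {S : Matrix (Fin q) (Fin q) ℝ} (hS : S.PosDef) :
    (Psi q ρ' Q S).PosDef := by
  have hSinv : (S⁻¹).PosDef := hS.inv
  refine Matrix.posDef_iff_dotProduct_mulVec.mpr ⟨?_, ?_⟩
  · -- Hermitian
    ext i j
    rw [Matrix.conjTranspose_apply, psi_apply, psi_apply, star_trivial]
    apply integral_congr_ae
    filter_upwards [hQpsd] with M hM
    by_cases h0 : M = 0
    · simp [h0]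
    · rw [if_neg h0, if_neg h0, psd_entry_symm hM.1 i j]
  · intro x hx
    rw [star_trivial]
    have hexp : x ⬝ᵥ (Psi q ρ' Q S).mulVec x = ∑ i, ∑ j, (x i * x j) * Psi q ρ' Q S i j :=
      dotProduct_mulVec_expand x _
    obtain ⟨hginteg, hgint⟩ := psi_weighted hρ hQpsd hint hq hSinv (fun i j => x i * x j)
    rw [hexp]
    simp only [psi_apply]
    rw [← hgint]
    set g : Matrix (Fin q) (Fin q) ℝ → ℝ :=
      fun M => if M = 0 then 0 else ρ' (S⁻¹ * M).trace * (∑ i, ∑ j, (x i * x j) * M i j)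
      with hg
    have hgq : ∀ M : Matrix (Fin q) (Fin q) ℝ,
        g M = if M = 0 then 0 else ρ' (S⁻¹ * M).trace * (x ⬝ᵥ M.mulVec x) := by
      intro M
      by_cases h0 : M = 0
      · simp [hg, h0]
      · simp only [hg, if_neg h0, dotProduct_mulVec_expand]
    have hgnonneg : 0 ≤ᵐ[Q] g := by
      filter_upwards [hQpsd] with M hM
      rw [Pi.zero_apply, hgq]
      by_cases h0 : M = 0
      · simp [h0]
      · rw [if_neg h0]
        have h1 : 0 < ρ' (S⁻¹ * M).trace :=
          hρ.2.2.1 _ (trace_posdef_mul_pos hq hSinv hM h0)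
        have h2 : 0 ≤ x ⬝ᵥ M.mulVec x := by simpa [star_trivial] using hM.dotProduct_mulVec_nonneg x
        positivity
    rw [integral_pos_iff_support_of_nonneg_ae hgnonneg hginteg]
    set u : Set (Matrix (Fin q) (Fin q) ℝ) := {M | M.mulVec x = 0} with hu
    have humeas : MeasurableSet u := measurableSet_mulVec_zero x
    have h1 : Q uᶜ = 1 - Q u := prob_compl_eq_one_sub humeas
    have h2 : 0 < Q uᶜ := by
      rw [h1]
      exact tsub_pos_iff_lt.mpr (hker x hx)
    have hnull : Q {M | ¬ M.PosSemidef} = 0 := ae_iff.mp hQpsd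
    have hsub : uᶜ ⊆ Function.support g ∪ {M | ¬ M.PosSemidef} := by
      intro M hMu
      by_cases hpsd : M.PosSemidef
      · left
        have hMx : M.mulVec x ≠ 0 := hMu
        have h0 : M ≠ 0 := by
          rintro rfl
          exact hMx (Matrix.zero_mulVec x)
        have hb : 0 < ρ' (S⁻¹ * M).trace :=
          hρ.2.2.1 _ (trace_posdef_mul_pos hq hSinv hpsd h0)
        have hxMx : x ⬝ᵥ M.mulVec x ≠ 0 := by
          intro hzero
          apply hMx
          have := (hpsd.dotProduct_mulVec_zero_iff x).mp (by simpa [star_trivial] using hzero)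
          exact this
        rw [Function.mem_support, hgq, if_neg h0]
        exact mul_ne_zero hb.ne' hxMx
      · right
        exact hpsd
    calc 0 < Q uᶜ := h2
    _ ≤ Q (Function.support g ∪ {M | ¬ M.PosSemidef}) := measure_mono hsub
    _ ≤ Q (Function.support g) + Q {M | ¬ M.PosSemidef} := measure_union_le _ _
    _ = Q (Function.support g) := by rw [hnull, add_zero]

end H
section I
variable {q : ℕ} {ρ ρ' : ℝ → ℝ}
  {Q : Measure (Matrix (Fin q) (Fin q) ℝ)} [IsProbabilityMeasure Q]

lemma trace_mul_entries' (W M : Matrix (Fin q) (Fin q) ℝ) :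
    (W * M).trace = ∑ i, ∑ j, W j i * M i j := by
  rw [trace_mul_entries]
  exact Finset.sum_comm

lemma psi_trace_contract (hρ : RhoAss ρ ρ') (hQpsd : ∀ᵐ M ∂Q, M.PosSemidef)
    (hint : Integrable (fun M : Matrix (Fin q) (Fin q) ℝ => M.trace * ρ' M.trace) Q)
    (hq : 1 ≤ q) {S : Matrix (Fin q) (Fin q) ℝ} (hS : S.PosDef)
    (B : Matrix (Fin q) (Fin q) ℝ) :
    Integrable (fun M : Matrix (Fin q) (Fin q) ℝ =>
      if M = 0 then 0 else ρ' (S⁻¹ * M).trace * (B * M).trace) Q ∧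
    ∫ M, (if M = 0 then 0 else ρ' (S⁻¹ * M).trace * (B * M).trace) ∂Q
      = (B * Psi q ρ' Q S).trace := by
  have hSinv : (S⁻¹).PosDef := hS.inv
  obtain ⟨hinteg, hval⟩ := psi_weighted hρ hQpsd hint hq hSinv (fun i j => B j i)
  have hfun : (fun M : Matrix (Fin q) (Fin q) ℝ =>
      if M = 0 then 0 else ρ' (S⁻¹ * M).trace * (B * M).trace)
      = fun M => if M = 0 then 0 else ρ' (S⁻¹ * M).trace * (∑ i, ∑ j, B j i * M i j) := by
    funext M
    rw [trace_mul_entries' B M]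
  rw [hfun]
  refine ⟨hinteg, ?_⟩
  rw [hval, trace_mul_entries' B (Psi q ρ' Q S)]
  rfl

open scoped MatrixOrder in
/-- The key strict inequality via eigenvalues. -/
lemma improvement_ineq (hq : 1 ≤ q) {S T : Matrix (Fin q) (Fin q) ℝ}
    (hS : S.PosDef) (hT : T.PosDef) (hne : T ≠ S) :
    (q : ℝ) - (S⁻¹ * T).trace + (Real.log T.det - Real.log S.det) < 0 := by
  have hA : (S⁻¹).PosDef := hS.inv
  set E : Matrix (Fin q) (Fin q) ℝ := CFC.sqrt S⁻¹ with hE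
  have hEpsd : E.PosSemidef := (CFC.sqrt_nonneg _).posSemidef
  have hEE : E * E = S⁻¹ := CFC.sqrt_mul_sqrt_self _ hA.posSemidef.nonneg
  have hdetE2 : E.det * E.det = (S⁻¹).det := by rw [← Matrix.det_mul, hEE]
  have hdetSinv : (0:ℝ) < (S⁻¹).det := hA.det_pos
  have hdetE : E.det ≠ 0 := by
    intro h
    rw [h, mul_zero] at hdetE2
    exact hdetSinv.ne' hdetE2.symm
  have hdetEunit : IsUnit E.det := hdetE.isUnit
  set G : Matrix (Fin q) (Fin q) ℝ := E * T * E with hG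
  have hGpos : G.PosDef := by
    refine Matrix.posDef_iff_dotProduct_mulVec.mpr ⟨?_, ?_⟩
    · show Gᴴ = G
      rw [hG, Matrix.conjTranspose_mul, Matrix.conjTranspose_mul, hEpsd.isHermitian,
        hT.isHermitian, ← Matrix.mul_assoc]
    · intro x hx
      have hEinj : Function.Injective (E.mulVec) :=
        Matrix.mulVec_injective_iff_isUnit.mpr ((Matrix.isUnit_iff_isUnit_det E).mpr hdetEunit)
      have hEx : E.mulVec x ≠ 0 := by
        intro h
        apply hx
        apply hEinj
        rw [h, Matrix.mulVec_zero]
      have hEsymm : Eᵀ = E := by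
        rw [← Matrix.conjTranspose_eq_transpose_of_trivial, hEpsd.isHermitian]
      have hswap : ∀ w : Fin q → ℝ, x ⬝ᵥ E.mulVec w = (E.mulVec x) ⬝ᵥ w := by
        intro w
        rw [Matrix.dotProduct_mulVec, ← Matrix.vecMul_transpose, hEsymm]
      have hquad : star x ⬝ᵥ G.mulVec x = star (E.mulVec x) ⬝ᵥ T.mulVec (E.mulVec x) := by
        rw [hG, ← Matrix.mulVec_mulVec, ← Matrix.mulVec_mulVec, star_trivial, star_trivial,
          hswap]
      rw [hquad]
      exact hT.dotProduct_mulVec_pos hEx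
  have htrG : G.trace = (S⁻¹ * T).trace := by
    rw [hG, Matrix.trace_mul_cycle, hEE]
  have hdetG : G.det = (S⁻¹).det * T.det := by
    rw [hG, Matrix.det_mul, Matrix.det_mul, ← hdetE2]; ring
  have hG1 : G ≠ 1 := by
    intro h
    apply hne
    have h2 : E⁻¹ * (E * T * E) * E⁻¹ = T := by
      rw [Matrix.mul_assoc E T E, ← Matrix.mul_assoc E⁻¹, Matrix.nonsing_inv_mul E hdetEunit,
        Matrix.one_mul, Matrix.mul_assoc, Matrix.mul_nonsing_inv E hdetEunit, Matrix.mul_one]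
    rw [← hG, h, Matrix.mul_one] at h2
    have h3 : E⁻¹ * E⁻¹ = S := by
      rw [← Matrix.mul_inv_rev, hEE, Matrix.nonsing_inv_nonsing_inv S hS.det_pos.ne'.isUnit]
    rw [← h2, h3]
  obtain ⟨-, hstrict⟩ := logdet_le_trace_sub hq hGpos
  have hlt := hstrict hG1
  have hlogG : Real.log G.det = Real.log T.det - Real.log S.det := by
    rw [hdetG, Real.log_mul hdetSinv.ne' hT.det_pos.ne', Matrix.det_nonsing_inv,
      Ring.inverse_eq_inv, Real.log_inv]
    ring
  rw [hlogG, htrG] at hlt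
  linarith

end I


/-- One step of the fixed-point iteration improves the criterion: if
`Q({M : Mv = 0}) < 1` for all `v ≠ 0` and `∫ ψ(tr M) Q(dM) < ∞`, then for every
symmetric positive definite `Σ`, the matrix `Ψ_ρ(Σ,Q)` is symmetric positive definite
and `L_ρ(Ψ_ρ(Σ,Q), Q) < L_ρ(Σ, Q)` unless `Ψ_ρ(Σ,Q) = Σ`. -/
theorem stmt12 (q : ℕ) (hq : 1 ≤ q) (ρ ρ' : ℝ → ℝ) (hρ : RhoAss ρ ρ')
    (Q : Measure (Matrix (Fin q) (Fin q) ℝ)) [IsProbabilityMeasure Q]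
    (hQpsd : ∀ᵐ M ∂Q, M.PosSemidef)
    (hcase : Case0 q ρ Q ∨ ∃ ψb : ℝ≥0∞, Case1 q ρ ρ' Q ψb)
    (hker : ∀ v : Fin q → ℝ, v ≠ 0 → Q {M | M.mulVec v = 0} < 1)
    (hint : Integrable (fun M : Matrix (Fin q) (Fin q) ℝ => M.trace * ρ' M.trace) Q)
    (S : Matrix (Fin q) (Fin q) ℝ) (hS : S.PosDef) :
    (Psi q ρ' Q S).PosDef ∧
    (Psi q ρ' Q S ≠ S → Lrho q ρ Q (Psi q ρ' Q S) < Lrho q ρ Q S) := by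
  have hTpos : (Psi q ρ' Q S).PosDef := psi_posdef hρ hQpsd hint hker hq hS
  refine ⟨hTpos, ?_⟩
  intro hne
  set T : Matrix (Fin q) (Fin q) ℝ := Psi q ρ' Q S with hT
  have hAinv : (S⁻¹).PosDef := hS.inv
  have hBinv : (T⁻¹).PosDef := hTpos.inv
  have hIS : Integrable (fun M : Matrix (Fin q) (Fin q) ℝ =>
      rho0 ρ (S⁻¹ * M).trace - rho0 ρ M.trace) Q :=
    integrable_rho_diff hρ hQpsd hint hq hAinv
  have hIT : Integrable (fun M : Matrix (Fin q) (Fin q) ℝ =>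
      rho0 ρ (T⁻¹ * M).trace - rho0 ρ M.trace) Q :=
    integrable_rho_diff hρ hQpsd hint hq hBinv
  have hLS : Lrho q ρ Q S
      = (∫ M, (rho0 ρ (S⁻¹ * M).trace - rho0 ρ M.trace) ∂Q) + Real.log S.det := by
    unfold Lrho
    congr 1
    exact integral_congr_ae (rho0_congr_ae hρ hQpsd hq hAinv)
  have hLT : Lrho q ρ Q T
      = (∫ M, (rho0 ρ (T⁻¹ * M).trace - rho0 ρ M.trace) ∂Q) + Real.log T.det := by
    unfold Lrho
    congr 1
    exact integral_congr_ae (rho0_congr_ae hρ hQpsd hq hBinv)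
  -- difference of the two integrals
  have hIdiff : Integrable (fun M : Matrix (Fin q) (Fin q) ℝ =>
      rho0 ρ (T⁻¹ * M).trace - rho0 ρ (S⁻¹ * M).trace) Q := by
    apply (hIT.sub hIS).congr
    filter_upwards with M
    simp only [Pi.sub_apply]
    ring
  have hdiff : (∫ M, (rho0 ρ (T⁻¹ * M).trace - rho0 ρ M.trace) ∂Q)
      - (∫ M, (rho0 ρ (S⁻¹ * M).trace - rho0 ρ M.trace) ∂Q)
      = ∫ M, (rho0 ρ (T⁻¹ * M).trace - rho0 ρ (S⁻¹ * M).trace) ∂Q := by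
    rw [← integral_sub hIT hIS]
    apply integral_congr_ae
    filter_upwards with M
    ring
  obtain ⟨hcint, hcval⟩ := psi_trace_contract hρ hQpsd hint hq hS (T⁻¹ - S⁻¹)
  have htrace_id : ((T⁻¹ - S⁻¹) * T).trace = (q : ℝ) - (S⁻¹ * T).trace := by
    rw [Matrix.sub_mul, Matrix.trace_sub,
      Matrix.nonsing_inv_mul T hTpos.det_pos.ne'.isUnit, Matrix.trace_one]
    simp
  have hmono : (∫ M, (rho0 ρ (T⁻¹ * M).trace - rho0 ρ (S⁻¹ * M).trace) ∂Q)
      ≤ ∫ M, (if M = 0 then 0 else ρ' (S⁻¹ * M).trace * ((T⁻¹ - S⁻¹) * M).trace) ∂Q := by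
    apply integral_mono_ae hIdiff hcint
    filter_upwards [hQpsd] with M hM
    by_cases h0 : M = 0
    · subst h0
      simp [rho0]
    · have ha : 0 < (S⁻¹ * M).trace := trace_posdef_mul_pos hq hAinv hM h0
      have hb : 0 < (T⁻¹ * M).trace := trace_posdef_mul_pos hq hBinv hM h0
      have hr : rho0 ρ (T⁻¹ * M).trace - rho0 ρ (S⁻¹ * M).trace
          = ρ (T⁻¹ * M).trace - ρ (S⁻¹ * M).trace := by simp [rho0, ha, hb]
      rw [hr, if_neg h0, Matrix.sub_mul, Matrix.trace_sub]
      exact rho_slope hρ _ _ ha hb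
  have himp := improvement_ineq hq hS hTpos hne
  rw [hcval, ← hT, htrace_id] at hmono
  rw [hLT, hLS]
  linarith [hmono, himp, hdiff]
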